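/- arXiv:comp-gas/9411001 — 5 statements merged into one kernel-verified Lean document; each statement's English description precedes it below -/
import Mathlib

section
/- Let B be a finite type, A : Finset B → Finset B → ℝ, and P : Finset B → ℝ. Define N(μ) = Σ_{s ⊇ μ} P(s), the post-collision probabilities P'(s') = Σ_{s} A(s,s')·P(s), and the post-collision means N'(μ) = Σ_{s' ⊇ μ} P'(s'). Then for every μ ∈ Finset B, N'(μ) = Σ_{ν ∈ Finset B} V(μ,ν) · N(ν), where V(μ,ν) = Σ_{s' ∈ Finset B with μ ⊆ s'} Σ_{s ⊆ ν} (−1)^(|ν|−|s|) · A(s, s') are the mean vertex coefficients of A. -/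
/-!
The means are the upper sums `N μ = ∑_{s ⊇ μ} P s` of the probabilities, so Möbius inversion on the
Boolean lattice recovers `P s = ∑_{ν ⊇ s} (-1)^(|ν|-|s|) N ν`; the Möbius function of the lattice of
finsets is `(-1)^(|t|-|s|)` because the alternating sum over the interval `[s, t] ≅ 𝒫(t \ s)`
vanishes unless `s = t`. Substituting into `P' = A P` and exchanging the sums over `s` and `ν`
gives the vertex coefficients.
-/

open Finset IncidenceAlgebra

namespace Finset

variable {α R : Type*} [DecidableEq α] [Ring R]

theorem sum_Icc_neg_one_pow_card_sub (s t : Finset α) :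
    ∑ u ∈ Icc s t, (-1 : R) ^ (#u - #s) = if s = t then 1 else 0 := by
  by_cases hst : s ⊆ t
  · have hdisj : ∀ w ∈ (t \ s).powerset, Disjoint s w := fun w hw =>
      disjoint_sdiff.mono_right (mem_powerset.1 hw)
    have hinj : Set.InjOn (s ∪ ·) (t \ s).powerset := fun w hw w' hw' h => by
      rw [← union_sdiff_cancel_left (hdisj w hw), ← union_sdiff_cancel_left (hdisj w' hw')]
      exact congrArg (· \ s) h
    rw [Icc_eq_image_powerset hst, sum_image hinj]
    calc ∑ w ∈ (t \ s).powerset, (-1 : R) ^ (#(s ∪ w) - #s)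
        = ((∑ w ∈ (t \ s).powerset, (-1 : ℤ) ^ #w : ℤ) : R) := by
          push_cast
          refine sum_congr rfl fun w hw => ?_
          rw [card_union_of_disjoint (hdisj w hw), Nat.add_sub_cancel_left]
      _ = if s = t then 1 else 0 := by
          have hempty : t \ s = ∅ ↔ s = t := by
            rw [sdiff_eq_empty_iff_subset, subset_antisymm_iff, and_iff_right hst]
          simp only [sum_powerset_neg_one_pow_card, hempty]
          split_ifs <;> simp
  · rw [Icc_eq_empty hst, sum_empty, if_neg fun h => hst h.le]

end Finset

namespace IncidenceAlgebra

variable {α : Type*} (R : Type*) [DecidableEq α] [Ring R]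

theorem mu_finset_of_subset {s t : Finset α} (h : s ⊆ t) : mu R s t = (-1) ^ (#t - #s) := by
  let m : IncidenceAlgebra R (Finset α) :=
    ⟨fun s t => if s ⊆ t then (-1) ^ (#t - #s) else 0, fun _ _ h => if_neg h⟩
  have hm : m * zeta R = 1 := by
    ext s t _
    rw [mul_apply, one_apply, ← sum_Icc_neg_one_pow_card_sub]
    refine sum_congr rfl fun u hu => ?_
    obtain ⟨hsu, hut⟩ := mem_Icc.1 hu
    simp [m, zeta_apply, hsu, hut]
  have hm_eq_mu : m = mu R := by
    rw [← one_mul (mu R), ← hm, mul_assoc, zeta_mul_mu, mul_one]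
  rw [← hm_eq_mu]
  exact if_pos h

end IncidenceAlgebra

namespace Finset

variable {α R : Type*} [DecidableEq α] [Fintype α] [Ring R]

theorem moebius_inversion_superset (f g : Finset α → R) (h : ∀ s, g s = ∑ t ∈ Ici s, f t)
    (s : Finset α) : f s = ∑ t ∈ Ici s, (-1) ^ (#t - #s) * g t := by
  rw [moebius_inversion_top f g h s]
  exact sum_congr rfl fun t ht => by rw [mu_finset_of_subset R (mem_Ici.1 ht)]

end Finset

/-- The action of a collision matrix `A` on the space of multipoint means:
the post-collision means are obtained from the pre-collision means via the
mean vertex coefficients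
`V(μ,ν) = Σ_{s' ⊇ μ} Σ_{s ⊆ ν} (−1)^(|ν|−|s|) A(s,s')`. -/
theorem collision_action_on_means
    (B : Type*) [Fintype B] [DecidableEq B]
    (A : Finset B → Finset B → ℝ) (P : Finset B → ℝ)
    (N : Finset B → ℝ) (hN : ∀ μ, N μ =
      ∑ s ∈ Finset.univ.filter (fun s : Finset B => μ ⊆ s), P s)
    (P' : Finset B → ℝ) (hP' : ∀ s', P' s' = ∑ s : Finset B, A s s' * P s)
    (N' : Finset B → ℝ) (hN' : ∀ μ, N' μ =
      ∑ s' ∈ Finset.univ.filter (fun s' : Finset B => μ ⊆ s'), P' s')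
    (V : Finset B → Finset B → ℝ) (hV : ∀ μ ν, V μ ν =
      ∑ s' ∈ Finset.univ.filter (fun s' : Finset B => μ ⊆ s'),
        ∑ s ∈ ν.powerset, (-1 : ℝ) ^ (ν.card - s.card) * A s s') :
    ∀ μ : Finset B, N' μ = ∑ ν : Finset B, V μ ν * N ν := by
  have hP : ∀ s, P s = ∑ ν ∈ Ici s, (-1) ^ (#ν - #s) * N ν :=
    moebius_inversion_superset P N fun μ => by rw [hN, filter_le_eq_Ici]
  have hP'N : ∀ s', P' s' = ∑ ν, (∑ s ∈ ν.powerset, (-1) ^ (#ν - #s) * A s s') * N ν := by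
    intro s'
    simp_rw [hP', hP, mul_sum, sum_mul]
    rw [sum_comm' (t' := univ) (s' := fun ν => ν.powerset) (by simp)]
    simp only [mul_assoc, mul_left_comm]
  intro μ
  simp_rw [hN', hP'N, hV, sum_mul]
  exact sum_comm
end

section
/- Let B be a finite type of cardinality n and A : Finset B → Finset B → ℝ satisfy semi-detailed balance, Σ_{s ∈ Finset B} A(s,s') = 1 for every s', and particle conservation, A(s,s') = 0 whenever |s| ≠ |s'|. Then for every f ∈ ℝ the Bernoulli product distribution P(s) = f^(|s|) · (1−f)^(n−|s|) is stationary under the collision: Σ_{s ∈ Finset B} A(s,s') · P(s) = P(s') for every s' ∈ Finset B. -/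
theorem Finset.sum_mul_eq_sum_mul_of_supported_on_level_set {ι κ R : Type*} [Fintype ι]
    [CommSemiring R] (a p : ι → R) (g : ι → κ) (j : ι)
    (ha : ∀ i, g i ≠ g j → a i = 0) (hp : ∀ i, g i = g j → p i = p j) :
    ∑ i, a i * p i = (∑ i, a i) * p j := by
  rw [Finset.sum_mul]
  refine Finset.sum_congr rfl fun i _ => ?_
  by_cases hi : g i = g j
  · rw [hp i hi]
  · rw [ha i hi, zero_mul, zero_mul]

theorem semi_detailed_balance_factorized_equilibrium_general
    (B : Type*) [Fintype B]
    (A : Finset B → Finset B → ℝ)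
    (hSDB : ∀ s' : Finset B, ∑ s : Finset B, A s s' = 1)
    (hCons : ∀ s s' : Finset B, s.card ≠ s'.card → A s s' = 0)
    (f : ℝ) (P : Finset B → ℝ)
    (hP : ∀ s : Finset B, P s = f ^ s.card * (1 - f) ^ (Fintype.card B - s.card)) :
    ∀ s' : Finset B, ∑ s : Finset B, A s s' * P s = P s' := by
  intro s'
  have hP_card : ∀ s : Finset B, s.card = s'.card → P s = P s' := fun s hs => by
    rw [hP, hP, hs]
  rw [Finset.sum_mul_eq_sum_mul_of_supported_on_level_set (A · s') P Finset.card s'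
    (fun s => hCons s s') hP_card, hSDB, one_mul]

/-- A lattice gas collision rule satisfying semi-detailed balance
(`Σ_s A(s,s') = 1` for every `s'`) and particle conservation admits the
Bernoulli product (factorized Fermi-Dirac) distribution
`P(s) = f^|s| (1−f)^(n−|s|)` as a stationary single-site distribution. -/
theorem semi_detailed_balance_factorized_equilibrium
    (B : Type*) [Fintype B] [DecidableEq B]
    (A : Finset B → Finset B → ℝ)
    (hSDB : ∀ s' : Finset B, ∑ s : Finset B, A s s' = 1)
    (hCons : ∀ s s' : Finset B, s.card ≠ s'.card → A s s' = 0)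
    (f : ℝ) (P : Finset B → ℝ)
    (hP : ∀ s : Finset B, P s = f ^ s.card * (1 - f) ^ (Fintype.card B - s.card)) :
    ∀ s' : Finset B, ∑ s : Finset B, A s s' * P s = P s' :=
  semi_detailed_balance_factorized_equilibrium_general B A hSDB hCons f P hP
end

section
/- Let ι be a finite type and N : Finset ι → ℝ with N(∅) = 1. Then there exists a unique function Γ : Finset ι → ℝ with Γ(∅) = 0 such that for every α ∈ Finset ι, N(α) = Σ_{π ∈ Finpartition α} Π_{ζ ∈ π.parts} Γ(ζ), the sum running over all partitions of α into pairwise disjoint nonempty blocks and the product over the blocks of the partition. -/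
/-!
Splitting off the one-block partition, `N α = Γ α + (terms in Γ ζ for ζ ⊂ α)` whenever `α ≠ ∅`.
So `Γ α` is forced, and can be defined, by strong recursion on `α`; for `α = ∅` the only
partition is the empty one, which is where `N ∅ = 1` comes in.
-/

open Finset

namespace Finpartition

variable {α : Type*} [Lattice α] [OrderBot α] {a b : α} [Decidable (a = ⊥)]

theorem parts_top (ha : a ≠ ⊥) : (⊤ : Finpartition a).parts = {a} := by
  simp [Top.top, ha]

theorem eq_top_of_mem_parts {P : Finpartition a} (h : a ∈ P.parts) : P = ⊤ := by
  refine le_antisymm le_top fun c hc => ⟨a, h, ?_⟩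
  rw [parts_top (P.ne_bot h), mem_singleton] at hc
  exact hc.le

theorem lt_of_mem_parts_of_ne_top {P : Finpartition a} (hP : P ≠ ⊤) (hb : b ∈ P.parts) : b < a :=
  (P.le hb).lt_of_ne fun h => hP (eq_top_of_mem_parts (h ▸ hb))

end Finpartition

section

variable {ι R : Type*} [DecidableEq ι]

section CommSemiring

variable [CommSemiring R]

theorem sum_finpartition_empty_prod_parts (Γ : Finset ι → R) :
    ∑ π : Finpartition (∅ : Finset ι), ∏ ζ ∈ π.parts, Γ ζ = 1 := by
  have : Unique (Finpartition (∅ : Finset ι)) := inferInstanceAs (Unique (Finpartition ⊥))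
  rw [Fintype.sum_unique, Finpartition.parts_eq_empty_iff.2 rfl, prod_empty]

theorem sum_finpartition_prod_parts_eq_add {α : Finset ι} (hα : α ≠ ∅) (Γ : Finset ι → R) :
    ∑ π : Finpartition α, ∏ ζ ∈ π.parts, Γ ζ =
      Γ α + ∑ π ∈ univ.erase (⊤ : Finpartition α), ∏ ζ ∈ π.parts, Γ ζ := by
  rw [← add_sum_erase _ _ (mem_univ ⊤), Finpartition.parts_top hα, prod_singleton]

theorem sum_erase_top_prod_parts_congr {α : Finset ι} {Γ Γ' : Finset ι → R}
    (h : ∀ ζ ⊂ α, Γ ζ = Γ' ζ) :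
    ∑ π ∈ univ.erase (⊤ : Finpartition α), ∏ ζ ∈ π.parts, Γ ζ =
      ∑ π ∈ univ.erase (⊤ : Finpartition α), ∏ ζ ∈ π.parts, Γ' ζ :=
  sum_congr rfl fun _π hπ => prod_congr rfl fun _ζ hζ =>
    h _ (Finpartition.lt_of_mem_parts_of_ne_top (ne_of_mem_erase hπ) hζ)

theorem eq_of_sum_finpartition_prod_parts_eq [IsRightCancelAdd R] {Γ Γ' : Finset ι → R}
    (h₀ : Γ ∅ = Γ' ∅)
    (h : ∀ α, ∑ π : Finpartition α, ∏ ζ ∈ π.parts, Γ ζ =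
      ∑ π : Finpartition α, ∏ ζ ∈ π.parts, Γ' ζ) :
    Γ = Γ' := by
  funext α
  induction α using Finset.strongInduction with
  | H α ih =>
    rcases eq_or_ne α ∅ with rfl | hα
    · exact h₀
    · have := h α
      rwa [sum_finpartition_prod_parts_eq_add hα, sum_finpartition_prod_parts_eq_add hα,
        sum_erase_top_prod_parts_congr ih, add_left_inj] at this

end CommSemiring

variable [CommRing R]

/-- The `attach`es only expose `π ≠ ⊤` and `ζ ∈ π.parts` to the termination checker;
`connectedCorrelation_of_ne_empty` states the recursion without them. -/
noncomputable def connectedCorrelation (N : Finset ι → R) (α : Finset ι) : R :=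
  if α = ∅ then 0 else
    N α - ∑ π ∈ (univ.erase (⊤ : Finpartition α)).attach,
      ∏ ζ ∈ π.1.parts.attach, connectedCorrelation N ζ
termination_by α.card
decreasing_by
  exact card_lt_card (Finpartition.lt_of_mem_parts_of_ne_top (ne_of_mem_erase π.2) ζ.2)

theorem connectedCorrelation_empty (N : Finset ι → R) : connectedCorrelation N ∅ = 0 := by
  rw [connectedCorrelation, if_pos rfl]

theorem connectedCorrelation_of_ne_empty (N : Finset ι → R) {α : Finset ι} (hα : α ≠ ∅) :
    connectedCorrelation N α =
      N α - ∑ π ∈ univ.erase (⊤ : Finpartition α), ∏ ζ ∈ π.parts, connectedCorrelation N ζ := by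
  rw [connectedCorrelation, if_neg hα]
  simp only [prod_attach]
  rw [sum_attach (univ.erase ⊤) fun π : Finpartition α => ∏ ζ ∈ π.parts, connectedCorrelation N ζ]

theorem sum_finpartition_prod_connectedCorrelation {N : Finset ι → R} (hN : N ∅ = 1)
    (α : Finset ι) :
    ∑ π : Finpartition α, ∏ ζ ∈ π.parts, connectedCorrelation N ζ = N α := by
  rcases eq_or_ne α ∅ with rfl | hα
  · rw [hN, sum_finpartition_empty_prod_parts]
  · rw [sum_finpartition_prod_parts_eq_add hα, connectedCorrelation_of_ne_empty N hα,
      sub_add_cancel]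

end

theorem connected_correlation_functions_exist_unique_general
    (ι : Type*) [DecidableEq ι]
    (N : Finset ι → ℝ) (hN : N ∅ = 1) :
    ∃! Γ : Finset ι → ℝ, Γ ∅ = 0 ∧ ∀ α : Finset ι,
      N α = ∑ π : Finpartition α, ∏ ζ ∈ π.parts, Γ ζ := by
  refine ⟨connectedCorrelation N,
    ⟨connectedCorrelation_empty N, fun α => (sum_finpartition_prod_connectedCorrelation hN α).symm⟩,
    ?_⟩
  rintro Γ ⟨hΓ₀, hΓ⟩
  refine eq_of_sum_finpartition_prod_parts_eq (by rw [hΓ₀, connectedCorrelation_empty]) fun α => ?_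
  rw [← hΓ, sum_finpartition_prod_connectedCorrelation hN]

/-- Existence and uniqueness of the connected correlation functions `Γ`
associated to a system of multipoint means `N`, defined by the relation
`N(α) = Σ_{π partition of α} Π_{ζ ∈ π} Γ(ζ)`. -/
theorem connected_correlation_functions_exist_unique
    (ι : Type*) [Fintype ι] [DecidableEq ι]
    (N : Finset ι → ℝ) (hN : N ∅ = 1) :
    ∃! Γ : Finset ι → ℝ, Γ ∅ = 0 ∧ ∀ α : Finset ι,
      N α = ∑ π : Finpartition α, ∏ ζ ∈ π.parts, Γ ζ :=
  connected_correlation_functions_exist_unique_general ι N hN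
end

section
/- Let ι be a type, Γ₀ : Finset ι → ℝ with Γ₀(ζ) = 0 whenever |ζ| ≥ 2, let β ∈ Finset ι be nonempty and t ∈ ℝ. Define Γ₁ : Finset ι → ℝ by Γ₁(β) = Γ₀(β) + t and Γ₁(ζ) = Γ₀(ζ) for ζ ≠ β, and define f(Γ)(α) = Σ_{π ∈ Finpartition α} Π_{ζ ∈ π.parts} Γ(ζ). Then for every α ∈ Finset ι: f(Γ₁)(α) = f(Γ₀)(α) + t · (Π_{a ∈ α∖β} Γ₀({a})) if β ⊆ α, and f(Γ₁)(α) = f(Γ₀)(α) otherwise. -/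
/-!
Each product `∏_{ζ ∈ π} Γ₁ ζ` differs from `∏_{ζ ∈ π} Γ₀ ζ` only when `β` is a block of `π`,
and then by `t · ∏_{ζ ∈ π, ζ ≠ β} Γ₀ ζ`. Since `Γ₀` vanishes on blocks of size at least two,
this correction survives only for the partition of `α` into `β` and singletons, where it equals
`t · ∏_{a ∈ α ∖ β} Γ₀ {a}`; such a partition exists exactly when `β ⊆ α`.
-/

open Finset

theorem Finset.prod_eq_prod_add_of_eq_add {ι R : Type*} [DecidableEq ι] [CommSemiring R]
    (s : Finset ι) {f g : ι → R} {b : ι} {t : R} (hb : g b = f b + t)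
    (hne : ∀ i, i ≠ b → g i = f i) :
    ∏ i ∈ s, g i = ∏ i ∈ s, f i + if b ∈ s then t * ∏ i ∈ s.erase b, f i else 0 := by
  have herase : ∏ i ∈ s.erase b, g i = ∏ i ∈ s.erase b, f i :=
    prod_congr rfl fun i hi => hne i (ne_of_mem_erase hi)
  split_ifs with hbs
  · rw [← mul_prod_erase _ g hbs, ← mul_prod_erase _ f hbs, herase, hb, add_mul]
  · rw [add_zero]
    exact prod_congr rfl fun i hi => hne i (ne_of_mem_of_not_mem hi hbs)

namespace Finpartition

variable {ι : Type*} [DecidableEq ι] {α β : Finset ι}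

def blockWithSingletons (hβ : β.Nonempty) (hβα : β ⊆ α) : Finpartition α :=
  (⊥ : Finpartition (α \ β)).extend hβ.ne_empty sdiff_disjoint (sdiff_union_of_subset hβα)

theorem parts_blockWithSingletons (hβ : β.Nonempty) (hβα : β ⊆ α) :
    (blockWithSingletons hβ hβα).parts = insert β (⊥ : Finpartition (α \ β)).parts :=
  rfl

theorem notMem_bot_sdiff : β ∉ (⊥ : Finpartition (α \ β)).parts := by
  rw [mem_bot_iff]
  rintro ⟨a, ha, rfl⟩
  exact (mem_sdiff.1 ha).2 (mem_singleton_self a)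

theorem eq_blockWithSingletons (hβ : β.Nonempty) {π : Finpartition α} (hβπ : β ∈ π.parts)
    (hsingleton : ∀ ζ ∈ π.parts, ζ ≠ β → ζ.card = 1) :
    π = blockWithSingletons hβ (π.le hβπ) := by
  have eq_of_mem {ζ : Finset ι} {a : ι} (hζ : ζ ∈ π.parts) (hζβ : ζ ≠ β) (ha : a ∈ ζ) :
      ζ = {a} := by
    obtain ⟨b, rfl⟩ := card_eq_one.1 (hsingleton ζ hζ hζβ)
    rw [mem_singleton.1 ha]
  ext ζ
  rw [parts_blockWithSingletons, mem_insert, mem_bot_iff]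
  constructor
  · intro hζ
    refine or_iff_not_imp_left.2 fun hζβ => ?_
    obtain ⟨a, ha⟩ := π.nonempty_of_mem_parts hζ
    have haβ : a ∉ β := fun h => hζβ (π.eq_of_mem_parts hζ hβπ ha h)
    exact ⟨a, mem_sdiff.2 ⟨π.le hζ ha, haβ⟩, (eq_of_mem hζ hζβ ha).symm⟩
  · rintro (rfl | ⟨a, ha, rfl⟩)
    · exact hβπ
    obtain ⟨haα, haβ⟩ := mem_sdiff.1 ha
    obtain ⟨ζ, hζ, haζ⟩ := π.exists_mem haα
    have hζβ : ζ ≠ β := by rintro rfl; exact haβ haζ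
    rwa [← eq_of_mem hζ hζβ haζ]

theorem sum_ite_prod_erase_eq_prod_sdiff {R : Type*} [CommSemiring R] (Γ : Finset ι → R)
    (hΓ : ∀ ζ : Finset ι, 2 ≤ ζ.card → Γ ζ = 0) (hβ : β.Nonempty) :
    ∑ π : Finpartition α, (if β ∈ π.parts then ∏ ζ ∈ π.parts.erase β, Γ ζ else 0) =
      if β ⊆ α then ∏ a ∈ α \ β, Γ {a} else 0 := by
  split_ifs with hβα
  swap
  · exact sum_eq_zero fun π _ => if_neg fun hβπ => hβα (π.le hβπ)
  rw [sum_eq_single_of_mem (blockWithSingletons hβ hβα) (mem_univ _)]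
  · rw [if_pos (by simp [parts_blockWithSingletons]), parts_blockWithSingletons,
      erase_insert notMem_bot_sdiff, parts_bot, prod_map]
    rfl
  · intro π _ hπ
    refine ite_eq_right_iff.2 fun hβπ => ?_
    by_contra hprod
    refine hπ (eq_blockWithSingletons hβ hβπ fun ζ hζ hζβ => ?_)
    have hζ_pos : 0 < ζ.card := (π.nonempty_of_mem_parts hζ).card_pos
    by_contra hζ_one
    exact hprod (prod_eq_zero (mem_erase.2 ⟨hζβ, hζ⟩) (hΓ ζ (by omega)))

end Finpartition

/-- Exact linearization of the map `f` from connected correlation functions to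
multipoint means around a point `Γ₀` supported on singletons (a factorized
equilibrium): perturbing `Γ₀` by `t` at a single nonempty block `β` changes
`f(Γ)(α)` by `t · Π_{a ∈ α∖β} Γ₀({a})` when `β ⊆ α`, and not at all otherwise. -/
theorem ccf_to_means_linearization_at_equilibrium
    (ι : Type*) [DecidableEq ι]
    (Γ₀ : Finset ι → ℝ) (hΓ₀ : ∀ ζ : Finset ι, 2 ≤ ζ.card → Γ₀ ζ = 0)
    (β : Finset ι) (hβ : β.Nonempty) (t : ℝ)
    (Γ₁ : Finset ι → ℝ) (hΓ₁β : Γ₁ β = Γ₀ β + t)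
    (hΓ₁ : ∀ ζ : Finset ι, ζ ≠ β → Γ₁ ζ = Γ₀ ζ)
    (f : (Finset ι → ℝ) → Finset ι → ℝ)
    (hf : ∀ (G : Finset ι → ℝ) (α : Finset ι),
      f G α = ∑ π : Finpartition α, ∏ ζ ∈ π.parts, G ζ) :
    ∀ α : Finset ι,
      f Γ₁ α = f Γ₀ α + (if β ⊆ α then t * ∏ a ∈ α \ β, Γ₀ {a} else 0) := by
  intro α
  have hperturb (π : Finpartition α) := π.parts.prod_eq_prod_add_of_eq_add hΓ₁β hΓ₁
  simp_rw [hf, hperturb, sum_add_distrib, ← mul_ite_zero, ← mul_sum,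
    Finpartition.sum_ite_prod_erase_eq_prod_sdiff Γ₀ hΓ₀ hβ]
end

section
/- Let B and L be finite types and w : B × L → ℝ. For α ∈ Finset (B × L) and x ∈ L write α_x = {i ∈ B : (i,x) ∈ α}. For each x ∈ L let V_x : Finset B → Finset B → ℝ satisfy V_x(∅,ν) = 1 if ν = ∅ and 0 otherwise. Define K : Finset (B×L) → Finset (B×L) → ℝ by K(σ,τ) = Π_{x ∈ L} V_x(σ_x, τ_x), and define on ι = B × L the matrices M(τ,β) = Π_{a ∈ τ∖β} w(a) if β ⊆ τ and 0 otherwise, and M'(α,σ) = (−1)^(|α∖σ|) Π_{a ∈ α∖σ} w(a) if σ ⊆ α and 0 otherwise. Then for all α, β ∈ Finset (B×L): Σ_{σ,τ ∈ Finset (B×L)} M'(α,σ) · K(σ,τ) · M(τ,β) = Π_{x ∈ L} 𝒱_x(α_x, β_x), where 𝒱_x(μ',ν') = Σ_{μ ⊆ μ'} Σ_{ν with ν' ⊆ ν ⊆ B} (−1)^(|μ'∖μ|) · (Π_{i ∈ μ'∖μ} w(i,x)) · (Π_{j ∈ ν∖ν'} w(j,x)) · V_x(μ,ν). -/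
open Finset

section Aux

variable {B L : Type*} [Fintype B] [Fintype L] [DecidableEq B] [DecidableEq L]

/-- slice of a finset of `B × L` at a site `x`. -/
private def slc (γ : Finset (B × L)) (x : L) : Finset B :=
  Finset.univ.filter (fun i : B => (i, x) ∈ γ)

private lemma mem_slc {γ : Finset (B × L)} {x : L} {i : B} :
    i ∈ slc γ x ↔ (i, x) ∈ γ := by simp [slc]

/-- reconstruct a finset from its slices. -/
private def recon (f : L → Finset B) : Finset (B × L) :=
  Finset.univ.filter (fun a : B × L => a.1 ∈ f a.2)

private lemma slc_recon (f : L → Finset B) (x : L) : slc (recon f) x = f x := by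
  ext i; simp [slc, recon]

private lemma recon_slc (γ : Finset (B × L)) : recon (fun x => slc γ x) = γ := by
  ext ⟨i, x⟩; simp [slc, recon]

/-- the equivalence between finsets of `B × L` and families of slices. -/
private def sliceEquiv : Finset (B × L) ≃ (L → Finset B) where
  toFun γ x := slc γ x
  invFun := recon
  left_inv := recon_slc
  right_inv f := funext (slc_recon f)

private lemma slc_prod (γ : Finset (B × L)) (f : B × L → ℝ) :
    ∏ a ∈ γ, f a = ∏ x : L, ∏ i ∈ slc γ x, f (i, x) := by
  rw [← Finset.prod_fiberwise γ Prod.snd f]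
  refine Finset.prod_congr rfl fun x _ => ?_
  refine (Finset.prod_bij (fun (a : B × L) _ => a.1) ?_ ?_ ?_ ?_)
  · rintro ⟨i, y⟩ ha
    simp only [mem_filter] at ha
    obtain ⟨h1, h2⟩ := ha
    subst h2
    simpa [mem_slc] using h1
  · rintro ⟨i, y⟩ ha ⟨j, z⟩ hb h
    simp only [mem_filter] at ha hb
    obtain ⟨-, h2⟩ := ha; obtain ⟨-, h3⟩ := hb
    subst h2; subst h3
    simp_all
  · intro i hi
    exact ⟨(i, x), by simpa [mem_slc] using hi, rfl⟩
  · rintro ⟨i, y⟩ ha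
    simp only [mem_filter] at ha
    obtain ⟨-, h2⟩ := ha
    subst h2
    rfl

private lemma slc_sdiff (γ δ : Finset (B × L)) (x : L) :
    slc (γ \ δ) x = slc γ x \ slc δ x := by
  ext i; simp [mem_slc]

private lemma subset_iff_slc {γ δ : Finset (B × L)} :
    γ ⊆ δ ↔ ∀ x : L, slc γ x ⊆ slc δ x := by
  constructor
  · intro h x i hi
    exact mem_slc.2 (h (mem_slc.1 hi))
  · intro h a ha
    exact mem_slc.1 (h a.2 (mem_slc.2 ha))

private lemma prod_ite_all {p : L → Prop} [DecidablePred p] (f : L → ℝ) :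
    (∏ x : L, if p x then f x else 0) =
      if ∀ x, p x then ∏ x : L, f x else 0 := by
  by_cases h : ∀ x, p x
  · rw [if_pos h]
    exact Finset.prod_congr rfl fun x _ => if_pos (h x)
  · obtain ⟨x, hx⟩ := not_forall.1 h
    rw [if_neg h]
    exact Finset.prod_eq_zero (mem_univ x) (if_neg hx)

private lemma neg_one_pow_prod (s : Finset B) (g : B → ℝ) :
    (-1 : ℝ) ^ s.card * ∏ i ∈ s, g i = ∏ i ∈ s, (-(g i)) := by
  rw [← Finset.prod_const (-1 : ℝ), ← Finset.prod_mul_distrib]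
  exact Finset.prod_congr rfl fun i _ => by ring

end Aux

/-- Theorem 1 of the paper: the collision operator `𝒦 = M'·K·M` on the space
of connected correlation functions factorizes into a product over lattice
sites of the correlation vertex coefficients `𝒱_x`.  Here `B` is the set of
bits per site, `L` the lattice, `w` the equilibrium single-particle means,
`V_x` the mean vertex coefficients at site `x` (with `V_x(∅,ν) = δ(∅,ν)`),
`K(σ,τ) = Π_x V_x(σ_x,τ_x)` the collision operator on multipoint means, and
`M`, `M'` the Jacobians of the change of variables between multipoint means
and connected correlation functions at the factorized equilibrium. -/
theorem ccf_collision_operator_factorizes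
    (B L : Type*) [Fintype B] [Fintype L] [DecidableEq B] [DecidableEq L]
    (w : B × L → ℝ)
    (V : L → Finset B → Finset B → ℝ)
    (hV0 : ∀ (x : L) (ν : Finset B), V x ∅ ν = if ν = ∅ then 1 else 0)
    (proj : Finset (B × L) → L → Finset B)
    (hproj : ∀ (α : Finset (B × L)) (x : L),
      proj α x = Finset.univ.filter (fun i : B => (i, x) ∈ α))
    (K : Finset (B × L) → Finset (B × L) → ℝ)
    (hK : ∀ σ τ : Finset (B × L), K σ τ = ∏ x : L, V x (proj σ x) (proj τ x))
    (M M' : Finset (B × L) → Finset (B × L) → ℝ)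
    (hM : ∀ τ β : Finset (B × L),
      M τ β = if β ⊆ τ then ∏ a ∈ τ \ β, w a else 0)
    (hM' : ∀ α σ : Finset (B × L),
      M' α σ = if σ ⊆ α then (-1 : ℝ) ^ (α \ σ).card * ∏ a ∈ α \ σ, w a else 0)
    (cV : L → Finset B → Finset B → ℝ)
    (hcV : ∀ (x : L) (μ' ν' : Finset B), cV x μ' ν' =
      ∑ μ ∈ μ'.powerset,
        ∑ ν ∈ Finset.univ.filter (fun ν : Finset B => ν' ⊆ ν),
          (-1 : ℝ) ^ (μ' \ μ).card * (∏ i ∈ μ' \ μ, w (i, x)) *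
            (∏ j ∈ ν \ ν', w (j, x)) * V x μ ν) :
    ∀ α β : Finset (B × L),
      (∑ σ : Finset (B × L), ∑ τ : Finset (B × L), M' α σ * K σ τ * M τ β)
        = ∏ x : L, cV x (proj α x) (proj β x) := by
  intro α β
  have hproj' : proj = fun γ x => slc γ x := by
    funext γ x; rw [hproj]; rfl
  -- the per-site factor
  set F : L → Finset B → Finset B → ℝ := fun x μ ν =>
    (if μ ⊆ slc α x then ∏ i ∈ slc α x \ μ, (-(w (i, x))) else 0) * V x μ ν *
      (if slc β x ⊆ ν then ∏ j ∈ ν \ slc β x, w (j, x) else 0) with hF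
  -- Step 1: the summand factorizes over sites
  have key : ∀ σ τ : Finset (B × L),
      M' α σ * K σ τ * M τ β = ∏ x : L, F x (slc σ x) (slc τ x) := by
    intro σ τ
    have h1 : M' α σ = ∏ x : L,
        (if slc σ x ⊆ slc α x then ∏ i ∈ slc α x \ slc σ x, (-(w (i, x))) else 0) := by
      rw [hM', prod_ite_all (p := fun x => slc σ x ⊆ slc α x)
        (f := fun x => ∏ i ∈ slc α x \ slc σ x, (-(w (i, x))))]
      by_cases h : σ ⊆ α
      · rw [if_pos h, if_pos (subset_iff_slc.1 h), neg_one_pow_prod,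
          slc_prod (α \ σ) (fun a => -(w a))]
        exact Finset.prod_congr rfl fun x _ => by rw [slc_sdiff]
      · rw [if_neg h, if_neg fun hh => h (subset_iff_slc.2 hh)]
    have h2 : M τ β = ∏ x : L,
        (if slc β x ⊆ slc τ x then ∏ j ∈ slc τ x \ slc β x, w (j, x) else 0) := by
      rw [hM, prod_ite_all (p := fun x => slc β x ⊆ slc τ x)
        (f := fun x => ∏ j ∈ slc τ x \ slc β x, w (j, x))]
      by_cases h : β ⊆ τ
      · rw [if_pos h, if_pos (subset_iff_slc.1 h), slc_prod (τ \ β) w]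
        exact Finset.prod_congr rfl fun x _ => by rw [slc_sdiff]
      · rw [if_neg h, if_neg fun hh => h (subset_iff_slc.2 hh)]
    rw [h1, h2, hK, hproj']
    simp only [hF]
    rw [← Finset.prod_mul_distrib, ← Finset.prod_mul_distrib]
  -- Step 2: the site factor sums to cV
  have key2 : ∀ x : L, cV x (slc α x) (slc β x) = ∑ μ : Finset B, ∑ ν : Finset B, F x μ ν := by
    intro x
    rw [hcV]
    rw [show (slc α x).powerset = Finset.univ.filter (fun μ => μ ⊆ slc α x) by
      ext μ; simp]
    rw [Finset.sum_filter]
    refine Finset.sum_congr rfl fun μ _ => ?_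
    rw [Finset.sum_filter]
    by_cases hμ : μ ⊆ slc α x
    · rw [if_pos hμ]
      refine Finset.sum_congr rfl fun ν _ => ?_
      simp only [hF]
      by_cases hν : slc β x ⊆ ν
      · rw [if_pos hν, if_pos hν, if_pos hμ, neg_one_pow_prod]
        ring
      · rw [if_neg hν, if_neg hν, mul_zero]
    · rw [if_neg hμ]
      simp [hF, if_neg hμ]
  -- Step 3: put it together via the slice equivalence and prod-of-sums
  calc
    (∑ σ : Finset (B × L), ∑ τ : Finset (B × L), M' α σ * K σ τ * M τ β)
        = ∑ σ : Finset (B × L), ∑ τ : Finset (B × L), ∏ x : L, F x (slc σ x) (slc τ x) := by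
          exact Finset.sum_congr rfl fun σ _ => Finset.sum_congr rfl fun τ _ => key σ τ
    _ = ∑ s : L → Finset B, ∑ t : L → Finset B, ∏ x : L, F x (s x) (t x) := by
          rw [← Equiv.sum_comp (sliceEquiv (B := B) (L := L))
            (fun s => ∑ t : L → Finset B, ∏ x : L, F x (s x) (t x))]
          refine Finset.sum_congr rfl fun σ _ => ?_
          exact Equiv.sum_comp (sliceEquiv (B := B) (L := L))
            (fun t : L → Finset B => ∏ x : L, F x (slc σ x) (t x))
    _ = ∑ p : (L → Finset B) × (L → Finset B), ∏ x : L, F x (p.1 x) (p.2 x) := by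
          rw [Fintype.sum_prod_type]
    _ = ∑ q : L → Finset B × Finset B, ∏ x : L, F x (q x).1 (q x).2 := by
          exact (Equiv.sum_comp (Equiv.arrowProdEquivProdArrow L (fun _ => Finset B) (fun _ => Finset B))
            (fun p : (L → Finset B) × (L → Finset B) => ∏ x : L, F x (p.1 x) (p.2 x))).symm
    _ = ∏ x : L, ∑ y : Finset B × Finset B, F x y.1 y.2 := by
          rw [Fintype.prod_sum (fun x (y : Finset B × Finset B) => F x y.1 y.2)]
    _ = ∏ x : L, cV x (proj α x) (proj β x) := by
          refine Finset.prod_congr rfl fun x _ => ?_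
          rw [hproj', key2 x, Fintype.sum_prod_type]
end
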